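/- Let σ, θ ∈ ℝ, let Â(θ) and w := σ·Â(θ)/60 be as in the RK6L4R2 symbol, and let G := 1 - w + w²/2 - w³/6 + w⁴/24 - w⁵/120 + w⁶/720. For a grid function v : ℤ → ℂ, write D[v](j) := (v(j-4) - 8v(j-3) + 30v(j-2) - 80v(j-1) + 35v(j) + 24v(j+1) - 2v(j+2)). Then the Fourier mode u(n, j) := Gⁿ·exp(iθj) satisfies the full RK6L4R2 discrete update: setting v⁰(j) := u(n,j), v¹ := v⁰ - (σ/360)D[v⁰], v² := v⁰ - (σ/300)D[v¹], v³ := v⁰ - (σ/240)D[v²], v⁴ := v⁰ - (σ/180)D[v³], v⁵ := v⁰ - (σ/120)D[v⁴], one has u(n+1, j) = v⁰(j) - (σ/60)·D[v⁵](j) for all n ∈ ℕ and j ∈ ℤ. -/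
import Mathlib


/-- The Fourier mode `u n j = Gⁿ·exp(iθj)`, with `G` the degree-6 Taylor polynomial of
`exp(-w)` at the RK6L4R2 spatial symbol `w = σÂ(θ)/60`, satisfies the full six-stage
RK6L4R2 discrete update. -/
theorem rk6l4r2_fourier_mode (σ θ : ℝ)
    (Ahat : ℂ)
    (hAhat : Ahat = Complex.exp (-4 * Complex.I * θ) - 8 * Complex.exp (-3 * Complex.I * θ)
      + 30 * Complex.exp (-2 * Complex.I * θ) - 80 * Complex.exp (-Complex.I * θ)
      + 35 + 24 * Complex.exp (Complex.I * θ) - 2 * Complex.exp (2 * Complex.I * θ))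
    (w : ℂ) (hw : w = (σ : ℂ) * Ahat / 60)
    (G : ℂ)
    (hG : G = 1 - w + w ^ 2 / 2 - w ^ 3 / 6 + w ^ 4 / 24 - w ^ 5 / 120 + w ^ 6 / 720)
    (u : ℕ → ℤ → ℂ)
    (hu : ∀ (n : ℕ) (j : ℤ), u n j = G ^ n * Complex.exp (Complex.I * θ * j))
    (D : (ℤ → ℂ) → ℤ → ℂ)
    (hD : ∀ (v : ℤ → ℂ) (j : ℤ), D v j = v (j - 4) - 8 * v (j - 3) + 30 * v (j - 2)
      - 80 * v (j - 1) + 35 * v j + 24 * v (j + 1) - 2 * v (j + 2))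
    (n : ℕ)
    (v₀ v₁ v₂ v₃ v₄ v₅ : ℤ → ℂ)
    (hv0 : ∀ j : ℤ, v₀ j = u n j)
    (hv1 : ∀ j : ℤ, v₁ j = v₀ j - ((σ : ℂ) / 360) * D v₀ j)
    (hv2 : ∀ j : ℤ, v₂ j = v₀ j - ((σ : ℂ) / 300) * D v₁ j)
    (hv3 : ∀ j : ℤ, v₃ j = v₀ j - ((σ : ℂ) / 240) * D v₂ j)
    (hv4 : ∀ j : ℤ, v₄ j = v₀ j - ((σ : ℂ) / 180) * D v₃ j)
    (hv5 : ∀ j : ℤ, v₅ j = v₀ j - ((σ : ℂ) / 120) * D v₄ j) :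
    ∀ j : ℤ, u (n + 1) j = v₀ j - ((σ : ℂ) / 60) * D v₅ j := by
  -- notation for the pure Fourier mode
  set E : ℤ → ℂ := fun j => Complex.exp (Complex.I * θ * j) with hE
  -- action of the stencil on a multiple of the Fourier mode
  have key : ∀ (c : ℂ) (v : ℤ → ℂ), (∀ j, v j = c * E j) →
      ∀ j, D v j = c * Ahat * E j := by
    intro c v hv j
    have sh : ∀ m : ℤ, Complex.exp (Complex.I * θ * ((j + m : ℤ) : ℂ))
        = Complex.exp ((m : ℂ) * Complex.I * θ) * Complex.exp (Complex.I * θ * j) := by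
      intro m
      rw [← Complex.exp_add]
      push_cast
      ring
    have r4 : j - 4 = j + (-4 : ℤ) := by ring
    have r3 : j - 3 = j + (-3 : ℤ) := by ring
    have r2 : j - 2 = j + (-2 : ℤ) := by ring
    have r1 : j - 1 = j + (-1 : ℤ) := by ring
    have p1 : j + 1 = j + (1 : ℤ) := rfl
    have p2 : j + 2 = j + (2 : ℤ) := rfl
    rw [hD, hv, hv, hv, hv, hv, hv, hv, hAhat]
    simp only [hE, r4, r3, r2, r1, sh]
    push_cast
    ring
  have h0 : ∀ j, v₀ j = G ^ n * E j := by
    intro j; rw [hv0, hu]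
  have e1 : (σ : ℂ) / 360 * Ahat = w / 6 := by rw [hw]; ring
  have e2 : (σ : ℂ) / 300 * Ahat = w / 5 := by rw [hw]; ring
  have e3 : (σ : ℂ) / 240 * Ahat = w / 4 := by rw [hw]; ring
  have e4 : (σ : ℂ) / 180 * Ahat = w / 3 := by rw [hw]; ring
  have e5 : (σ : ℂ) / 120 * Ahat = w / 2 := by rw [hw]; ring
  have e6 : (σ : ℂ) / 60 * Ahat = w := by rw [hw]; ring
  have h1 : ∀ j, v₁ j = (G ^ n * (1 - w / 6)) * E j := by
    intro j; rw [hv1, key _ _ h0, h0]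
    linear_combination (-(G ^ n * E j)) * e1
  have h2 : ∀ j, v₂ j = (G ^ n * (1 - w / 5 * (1 - w / 6))) * E j := by
    intro j; rw [hv2, key _ _ h1, h0]
    linear_combination (-(G ^ n * (1 - w / 6) * E j)) * e2
  have h3 : ∀ j, v₃ j = (G ^ n * (1 - w / 4 * (1 - w / 5 * (1 - w / 6)))) * E j := by
    intro j; rw [hv3, key _ _ h2, h0]
    linear_combination (-(G ^ n * (1 - w / 5 * (1 - w / 6)) * E j)) * e3
  have h4 : ∀ j, v₄ j = (G ^ n * (1 - w / 3 * (1 - w / 4 * (1 - w / 5 * (1 - w / 6))))) * E j := by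
    intro j; rw [hv4, key _ _ h3, h0]
    linear_combination (-(G ^ n * (1 - w / 4 * (1 - w / 5 * (1 - w / 6))) * E j)) * e4
  have h5 : ∀ j, v₅ j = (G ^ n * (1 - w / 2 * (1 - w / 3 * (1 - w / 4 * (1 - w / 5 * (1 - w / 6)))))) * E j := by
    intro j; rw [hv5, key _ _ h4, h0]
    linear_combination (-(G ^ n * (1 - w / 3 * (1 - w / 4 * (1 - w / 5 * (1 - w / 6)))) * E j)) * e5
  intro j
  rw [hu, key _ _ h5, h0, pow_succ]
  linear_combination (G ^ n * (1 - w / 2 * (1 - w / 3 * (1 - w / 4 * (1 - w / 5 * (1 - w / 6))))) * E j) * e6 + (G ^ n * E j) * hG
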